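/- For n ≥ 7 odd, the group G_n = ⟨b, c | cbc = bcb, [bⁿ, c^{n+2}] = 1, (b⁻ⁿcb²)^{n+1}c^{n²} = 1⟩ contains a non-abelian free subgroup. -/

import Mathlib

/-!
The images `B = T⁻¹A` and `C = A⁻¹T²` of the generators in `SL(2, ℝ)`, where `A` has trace `0` and
`T` has trace `1` (so `A² = T³ = -1`), always satisfy the braid relation, and the two other relators
vanish once `Bⁿ = Aⁿ⁺¹ = ±1`. By the Chebyshev recursion for powers of a `2 × 2` matrix of
determinant one, this holds when `tr B = ±2 cos (π / n)`, the sign depending on the parity of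
`(n - 1) / 2`. For `n ≥ 7` the square of this trace exceeds `3`, which leaves room to choose `T` so
that the commutator `⁅A, T⁆` is diagonal and hyperbolic while `T` moves both coordinate cones of the
projective line off themselves. Ping-pong on these cones shows that a large power `K` of the
commutator and its conjugate `T K T⁻¹` generate a free group; both lie in the image of `G_n`, so
their preimages generate a free subgroup of `G_n`.
-/

/-- `G_n = ⟨b, c | cbc = bcb, [bⁿ, c^{n+2}] = 1, (b⁻ⁿcb²)^{n+1} c^{n²} = 1⟩`,
generators `b = of 0`, `c = of 1`. -/
def relsGn (n : ℕ) : Set (FreeGroup (Fin 2)) :=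
  let b := FreeGroup.of (0 : Fin 2)
  let c := FreeGroup.of (1 : Fin 2)
  {c * b * c * (b * c * b)⁻¹,
   b ^ n * c ^ (n + 2) * (b ^ n)⁻¹ * (c ^ (n + 2))⁻¹,
   ((b ^ n)⁻¹ * c * b ^ 2) ^ (n + 1) * c ^ (n ^ 2)}

open Real
open scoped Pointwise Function Matrix LinearAlgebra.Projectivization MatrixGroups commutatorElement

theorem lift_mem_relsGn_eq_one {G : Type*} [Group G] {n : ℕ} (hn : Odd n) {A T : G}
    (hAT : A ^ 2 = T ^ 3) (hB : (T⁻¹ * A) ^ n = A ^ (n + 1)) :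
    ∀ r ∈ relsGn n, FreeGroup.lift ![T⁻¹ * A, A⁻¹ * T ^ 2] r = 1 := by
  obtain ⟨k, rfl⟩ := hn
  have braid : A⁻¹ * T ^ 2 * (T⁻¹ * A) * (A⁻¹ * T ^ 2) = T⁻¹ * A * (A⁻¹ * T ^ 2) * (T⁻¹ * A) :=
    calc _ = A⁻¹ * T ^ 3 := by group
      _ = _ := by rw [← hAT]; group
  have hCB : A⁻¹ * T ^ 2 = T * (T⁻¹ * A) * T⁻¹ :=
    calc _ = A⁻¹ * T ^ 3 * T⁻¹ := by group
      _ = _ := by rw [← hAT]; group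
  have hCB2 : (A⁻¹ * T ^ 2 * (T⁻¹ * A) ^ 2) ^ 2 = A ^ 2 :=
    calc _ = A⁻¹ * T * A ^ 2 * T⁻¹ * A := by simp only [pow_succ, pow_zero, one_mul]; group
      _ = A⁻¹ * T ^ 3 * A := by rw [hAT]; group
      _ = _ := by rw [← hAT]; group
  -- `A ^ (n + 1)` is a power of `A ^ 2 = T ^ 3`, hence central in `⟨A, T⟩`.
  have heA : Commute (A ^ (2 * k + 1 + 1)) A := Commute.pow_self A _
  have heT : Commute (A ^ (2 * k + 1 + 1)) T := by
    rw [show 2 * k + 1 + 1 = 2 * (k + 1) by ring, pow_mul, hAT]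
    exact ((Commute.refl T).pow_left 3).pow_left _
  set e := A ^ (2 * k + 1 + 1)
  set B := T⁻¹ * A
  set C := A⁻¹ * T ^ 2
  have heB : Commute e B := heT.inv_right.mul_right heA
  have heC : Commute e C := heA.inv_right.mul_right (heT.pow_right 2)
  have hCn : C ^ (2 * k + 1) = e := by rw [hCB, conj_pow, hB, ← heT.eq, mul_inv_cancel_right]
  have hCB2n : (C * B ^ 2) ^ (2 * k + 1 + 1) = e := by
    rw [show 2 * k + 1 + 1 = 2 * (k + 1) by ring, pow_mul, hCB2, ← pow_mul]
    rfl
  intro r hr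
  simp only [relsGn, Set.mem_insert_iff, Set.mem_singleton_iff] at hr
  rcases hr with rfl | rfl | rfl <;>
    simp only [map_mul, map_inv, map_pow, FreeGroup.lift_apply_of, Matrix.cons_val_zero,
      Matrix.cons_val_one]
  · rw [braid, mul_inv_cancel]
  · rw [hB, (heC.pow_right _).eq, mul_inv_cancel_right, mul_inv_cancel]
  · rw [hB, mul_assoc, (heC.mul_right (heB.pow_right 2)).inv_left.mul_pow, hCB2n, pow_two,
      pow_mul, hCn]
    group

lemma exists_injective_of_forall_mem_range {ι G H : Type*} [Group G] [Group H] (ψ : G →* H)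
    {x : ι → H} (hx : ∀ i, x i ∈ ψ.range) (hinj : Function.Injective (FreeGroup.lift x)) :
    ∃ f : FreeGroup ι →* G, Function.Injective f := by
  choose y hy using hx
  have hψ : ψ.comp (FreeGroup.lift y) = FreeGroup.lift x :=
    FreeGroup.ext_hom _ _ fun i => by simp [hy]
  refine ⟨FreeGroup.lift y, fun a b hab => hinj ?_⟩
  rw [← hψ, MonoidHom.comp_apply, MonoidHom.comp_apply, hab]

lemma pairwise_disjoint_on_pair {α : Type*} {s t : Set α} (h : Disjoint s t) :
    Pairwise (Disjoint on ![s, t]) := by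
  intro i j hij
  fin_cases i <;> fin_cases j
  exacts [absurd rfl hij, h, h.symm, absurd rfl hij]

theorem FreeGroup.injective_lift_conj_of_ping_pong {G : Type} {α : Type*} [Group G]
    [MulAction G α] {g h : G} {X Y : Set α} (hX : X.Nonempty) (hXY : Disjoint X Y)
    (hgY : g • Yᶜ ⊆ X) (hgX : g⁻¹ • Xᶜ ⊆ Y) (hh : h • (X ∪ Y) ⊆ (X ∪ Y)ᶜ) :
    Function.Injective (FreeGroup.lift ![g, h * g * h⁻¹]) := by
  rw [Set.smul_set_union, Set.union_subset_iff, Set.subset_compl_iff_disjoint_right,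
    Set.subset_compl_iff_disjoint_right, Set.disjoint_union_right, Set.disjoint_union_right] at hh
  obtain ⟨⟨hhXX, hhXY⟩, hhYX, hhYY⟩ := hh
  have conj_smul (a : G) (s : Set α) : (h * a * h⁻¹) • (h • s)ᶜ = h • a • sᶜ := by
    rw [← Set.smul_set_compl, smul_smul, smul_smul, inv_mul_cancel_right]
  refine FreeGroup.injective_lift_of_ping_pong _ ![X, h • X] ![Y, h • Y]
    ?_ (pairwise_disjoint_on_pair hhXX.symm) (pairwise_disjoint_on_pair hhYY.symm) ?_ ?_ ?_
  · intro i
    fin_cases i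
    exacts [hX, hX.smul_set]
  · intro i j
    fin_cases i <;> fin_cases j
    exacts [hXY, hhYX.symm, hhXY, Set.disjoint_smul_set.mpr hXY]
  · intro i
    fin_cases i
    exacts [hgY, (conj_smul g Y).trans_subset (Set.smul_set_mono hgY)]
  · intro i
    fin_cases i
    · exact hgX
    · show (h * g * h⁻¹)⁻¹ • (h • X)ᶜ ⊆ h • Y
      rw [show (h * g * h⁻¹)⁻¹ = h * g⁻¹ * h⁻¹ by group, conj_smul]
      exact Set.smul_set_mono hgX

namespace Matrix

lemma sq_eq_trace_smul_sub_det_smul {R : Type*} [CommRing R] [Nontrivial R]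
    (M : Matrix (Fin 2) (Fin 2) R) : M ^ 2 = M.trace • M - M.det • 1 := by
  have := aeval_self_charpoly M
  rw [charpoly_fin_two] at this
  simp only [map_add, map_sub, map_pow, Polynomial.aeval_X, map_mul, Polynomial.aeval_C,
    Algebra.algebraMap_eq_smul_one, smul_mul_assoc, one_mul] at this
  rw [← sub_eq_zero, ← this]
  abel

lemma sq_eq_neg_one_of_trace_eq_zero {R : Type*} [CommRing R] [Nontrivial R]
    {M : Matrix (Fin 2) (Fin 2) R} (hdet : M.det = 1) (htr : M.trace = 0) : M ^ 2 = -1 := by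
  rw [sq_eq_trace_smul_sub_det_smul, hdet, htr, zero_smul, one_smul, zero_sub]

lemma pow_three_eq_neg_one_of_trace_eq_one {R : Type*} [CommRing R] [Nontrivial R]
    {M : Matrix (Fin 2) (Fin 2) R} (hdet : M.det = 1) (htr : M.trace = 1) : M ^ 3 = -1 := by
  rw [pow_succ, sq_eq_trace_smul_sub_det_smul, hdet, htr, one_smul, one_smul, sub_mul, ← sq,
    sq_eq_trace_smul_sub_det_smul, hdet, htr, one_smul, one_smul, one_mul]
  abel

lemma sin_smul_pow_succ {M : Matrix (Fin 2) (Fin 2) ℝ} {θ : ℝ} (hdet : M.det = 1)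
    (htr : M.trace = 2 * cos θ) (n : ℕ) :
    sin θ • M ^ (n + 1) = sin ((n + 1) * θ) • M - sin (n * θ) • 1 := by
  induction n with
  | zero => simp
  | succ n ih =>
    have hsin : sin ((n + 1 + 1) * θ) = 2 * cos θ * sin ((n + 1) * θ) - sin (n * θ) := by
      rw [show (n + 1 + 1) * θ = (n + 1) * θ + θ by ring, show n * θ = (n + 1) * θ - θ by ring,
        sin_add, sin_sub]
      ring
    rw [pow_succ, ← smul_mul_assoc, ih, sub_mul, smul_mul_assoc, ← sq,
      sq_eq_trace_smul_sub_det_smul, hdet, htr, smul_mul_assoc, one_mul]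
    push_cast
    rw [hsin]
    module

lemma pow_eq_cos_smul_one {M : Matrix (Fin 2) (Fin 2) ℝ} {θ : ℝ} (hdet : M.det = 1)
    (htr : M.trace = 2 * cos θ) (hθ : sin θ ≠ 0) {n : ℕ} (hn : sin (n * θ) = 0) :
    M ^ n = cos (n * θ) • 1 := by
  rcases n with _ | n
  · simp
  have key := sin_smul_pow_succ hdet htr n
  have hsin : sin (n * θ) = - cos ((n + 1) * θ) * sin θ := by
    rw [show (n : ℝ) * θ = (n + 1) * θ - θ by ring, sin_sub]
    push_cast at hn
    rw [hn]
    ring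
  push_cast at hn ⊢
  rw [hn, zero_smul, zero_sub, hsin, neg_mul, neg_smul, neg_neg, mul_comm, ← smul_smul] at key
  exact smul_right_injective _ hθ key

lemma pow_two_mul_add_one_eq_neg_one_pow {M : Matrix (Fin 2) (Fin 2) ℝ}
    (hdet : M.det = 1) {k : ℕ} (hk : 0 < k)
    (htr : M.trace = (-1) ^ k * (2 * cos (π / (2 * k + 1)))) :
    M ^ (2 * k + 1) = (-1) ^ (k + 1) := by
  have hnθ : ((2 * k + 1 : ℕ) : ℝ) * (π / (2 * k + 1) + k * π) = (k * (2 * k + 1) + 1 : ℕ) * π := by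
    push_cast
    field_simp
    ring
  have hπ : 0 < π / (2 * k + 1) := by positivity
  have hπ' : π / (2 * k + 1) < π := div_lt_self pi_pos (by norm_cast; omega)
  rw [pow_eq_cos_smul_one hdet (θ := π / (2 * k + 1) + k * π), hnθ, cos_nat_mul_pi,
    show k * (2 * k + 1) + 1 = k + 1 + 2 * (k * k) by ring, pow_add, pow_mul, neg_one_sq, one_pow,
    mul_one, ← Algebra.algebraMap_eq_smul_one, map_pow, map_neg, map_one]
  · rw [htr, cos_add_nat_mul_pi]
    ring
  · rw [sin_add_nat_mul_pi]
    exact mul_ne_zero (pow_ne_zero _ (by norm_num)) (sin_pos_of_pos_of_lt_pi hπ hπ').ne'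
  · rw [hnθ, sin_nat_mul_pi]

lemma mulVec_fin_two_apply_of_ne {R : Type*} [CommRing R] (M : Matrix (Fin 2) (Fin 2) R)
    (v : Fin 2 → R) {i j : Fin 2} (hij : i ≠ j) (l : Fin 2) :
    (M *ᵥ v) l = M l i * v i + M l j * v j := by
  fin_cases i <;> fin_cases j <;> simp_all [mulVec, dotProduct, Fin.sum_univ_two, add_comm]

end Matrix

lemma ne_zero_of_abs_le_div_ten {v : Fin 2 → ℝ} (hv : v ≠ 0) {i j : Fin 2} (hij : i ≠ j)
    (h : |v j| ≤ |v i| / 10) : v i ≠ 0 := by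
  intro hi
  have hj : v j = 0 := by simpa [hi] using h
  apply hv
  ext l
  fin_cases i <;> fin_cases j <;> fin_cases l <;> simp_all

lemma abs_add_mul_div_ten_lt {p q r s x y : ℝ} (hx : x ≠ 0) (hy : |y| ≤ |x| / 10)
    (h : (|p| + |q| / 10) / 10 < |r| - |s| / 10) : |p * x + q * y| / 10 < |r * x + s * y| := by
  have hupper : |p * x + q * y| ≤ (|p| + |q| / 10) * |x| :=
    calc |p * x + q * y| ≤ |p| * |x| + |q| * |y| := by
          simpa only [abs_mul] using abs_add_le (p * x) (q * y)
      _ ≤ (|p| + |q| / 10) * |x| := by nlinarith [abs_nonneg q]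
  have hlower : (|r| - |s| / 10) * |x| ≤ |r * x + s * y| :=
    calc (|r| - |s| / 10) * |x| ≤ |r| * |x| - |s| * |y| := by nlinarith [abs_nonneg s]
      _ ≤ |r * x + s * y| := by
          simpa only [abs_mul, abs_neg, sub_neg_eq_add]
            using abs_sub_abs_le_abs_sub (r * x) (-(s * y))
  nlinarith [abs_pos.mpr hx]

def axisCone (i j : Fin 2) : Set (ℙ ℝ (Fin 2 → ℝ)) := {p | |p.rep j| ≤ |p.rep i| / 10}

lemma mk_mem_axisCone {v : Fin 2 → ℝ} (hv : v ≠ 0) {i j : Fin 2} :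
    Projectivization.mk ℝ v hv ∈ axisCone i j ↔ |v j| ≤ |v i| / 10 := by
  obtain ⟨a, ha⟩ := Projectivization.exists_smul_eq_mk_rep ℝ v hv
  simp only [axisCone, Set.mem_ofPred_eq, ← ha, Pi.smul_apply, Units.smul_def, smul_eq_mul, abs_mul,
    mul_div_assoc]
  exact mul_le_mul_iff_right₀ (abs_pos.mpr a.ne_zero)

lemma axisCone_nonempty : (axisCone 0 1).Nonempty :=
  ⟨Projectivization.mk ℝ ![1, 0] (by simp), by simp [mk_mem_axisCone]⟩

lemma disjoint_axisCone {i j : Fin 2} (hij : i ≠ j) : Disjoint (axisCone i j) (axisCone j i) := by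
  refine Set.disjoint_left.mpr fun p hpij hpji => ?_
  have hpos : 0 < |p.rep i| := abs_pos.mpr (ne_zero_of_abs_le_div_ten p.rep_nonzero hij hpij)
  have h₁ : |p.rep j| ≤ |p.rep i| / 10 := hpij
  have h₂ : |p.rep i| ≤ |p.rep j| / 10 := hpji
  linarith

lemma smul_compl_axisCone_subset {g : SL(2, ℝ)} {d : Fin 2 → ℝ}
    (hg : (g : Matrix (Fin 2) (Fin 2) ℝ) = Matrix.diagonal d) {i j : Fin 2}
    (hd : 100 * |d j| ≤ |d i|) : g • (axisCone j i)ᶜ ⊆ axisCone i j := by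
  refine Set.smul_set_subset_iff.mpr fun p hp => ?_
  induction p using Projectivization.ind with | h v hv => ?_
  rw [Set.mem_compl_iff, mk_mem_axisCone, not_le] at hp
  rw [Projectivization.smul_mk, mk_mem_axisCone, Matrix.SpecialLinearGroup.smul_def,
    Matrix.smul_eq_mulVec, hg, Matrix.mulVec_diagonal, Matrix.mulVec_diagonal, abs_mul, abs_mul]
  nlinarith [abs_nonneg (d j), abs_nonneg (v i)]

lemma smul_axisCone_subset_compl {g : SL(2, ℝ)} {i j : Fin 2} (hij : i ≠ j)
    (h₁ : (|g i i| + |g i j| / 10) / 10 < |g j i| - |g j j| / 10)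
    (h₂ : (|g j i| + |g j j| / 10) / 10 < |g i i| - |g i j| / 10) :
    g • axisCone i j ⊆ (axisCone i j ∪ axisCone j i)ᶜ := by
  refine Set.smul_set_subset_iff.mpr fun p hp => ?_
  induction p using Projectivization.ind with | h v hv => ?_
  rw [mk_mem_axisCone] at hp
  have hvi := ne_zero_of_abs_le_div_ten hv hij hp
  rw [Projectivization.smul_mk, Set.mem_compl_iff, Set.mem_union, mk_mem_axisCone,
    mk_mem_axisCone, not_or, not_le, not_le, Matrix.SpecialLinearGroup.smul_def,
    Matrix.smul_eq_mulVec, Matrix.mulVec_fin_two_apply_of_ne _ _ hij,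
    Matrix.mulVec_fin_two_apply_of_ne _ _ hij]
  exact ⟨abs_add_mul_div_ten_lt hvi hp h₁, abs_add_mul_div_ten_lt hvi hp h₂⟩

section Construction

variable {A T : SL(2, ℝ)} {z t : ℝ}

lemma coe_inv_eq_diagonal {g : SL(2, ℝ)} {a b : ℝ}
    (hg : (g : Matrix (Fin 2) (Fin 2) ℝ) = Matrix.diagonal ![a, b]) :
    ((g⁻¹ : SL(2, ℝ)) : Matrix (Fin 2) (Fin 2) ℝ) = Matrix.diagonal ![b, a] := by
  rw [Matrix.SpecialLinearGroup.coe_inv, hg, Matrix.adjugate_fin_two]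
  ext i j
  fin_cases i <;> fin_cases j <;> simp

lemma coe_commutator_eq_diagonal (hA : (A : Matrix (Fin 2) (Fin 2) ℝ) = !![0, -1; 1, 0])
    (hT : (T : Matrix (Fin 2) (Fin 2) ℝ) = !![t, -(z * t); z * (1 - t), 1 - t]) :
    ((⁅A, T⁆ : SL(2, ℝ)) : Matrix (Fin 2) (Fin 2) ℝ) =
      Matrix.diagonal ![(1 + z ^ 2) * (1 - t) ^ 2, (1 + z ^ 2) * t ^ 2] := by
  simp only [commutatorElement_def, Matrix.SpecialLinearGroup.coe_mul,
    Matrix.SpecialLinearGroup.coe_inv, Matrix.adjugate_fin_two_of, hA, hT, Matrix.mul_fin_two,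
    Matrix.diagonal_fin_two, Matrix.cons_val_zero, Matrix.cons_val_one]
  congrm !![?_, ?_; ?_, ?_] <;> ring

lemma trace_coe_inv_mul (hA : (A : Matrix (Fin 2) (Fin 2) ℝ) = !![0, -1; 1, 0])
    (hT : (T : Matrix (Fin 2) (Fin 2) ℝ) = !![t, -(z * t); z * (1 - t), 1 - t]) :
    ((T⁻¹ * A : SL(2, ℝ)) : Matrix (Fin 2) (Fin 2) ℝ).trace = z := by
  simp only [Matrix.SpecialLinearGroup.coe_mul, Matrix.SpecialLinearGroup.coe_inv,
    Matrix.adjugate_fin_two_of, hA, hT, Matrix.mul_fin_two, Matrix.trace_fin_two_of]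
  ring

lemma smul_axisCones_subset_compl
    (hT : (T : Matrix (Fin 2) (Fin 2) ℝ) = !![t, -(z * t); z * (1 - t), 1 - t])
    (ht : 1 / 4 ≤ t) (ht' : t ≤ 1 / 2) (hz : 3 / 2 ≤ |z|) (hz' : |z| ≤ 2) :
    T • (axisCone 0 1 ∪ axisCone 1 0) ⊆ (axisCone 0 1 ∪ axisCone 1 0)ᶜ := by
  have h00 : |T 0 0| = t := by simp [hT, abs_of_nonneg (by linarith : 0 ≤ t)]
  have h01 : |T 0 1| = |z| * t := by
    simp [hT, abs_mul, abs_of_nonneg (by linarith : 0 ≤ t)]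
  have h10 : |T 1 0| = |z| * (1 - t) := by
    simp [hT, abs_mul, abs_of_nonneg (by linarith : 0 ≤ 1 - t)]
  have h11 : |T 1 1| = 1 - t := by simp [hT, abs_of_nonneg (by linarith : 0 ≤ 1 - t)]
  obtain ⟨e₁, e₂, e₃, e₄⟩ : (t + |z| * t / 10) / 10 < |z| * (1 - t) - (1 - t) / 10 ∧
      (|z| * (1 - t) + (1 - t) / 10) / 10 < t - |z| * t / 10 ∧
      (1 - t + |z| * (1 - t) / 10) / 10 < |z| * t - t / 10 ∧
      (|z| * t + t / 10) / 10 < 1 - t - |z| * (1 - t) / 10 := by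
    refine ⟨?_, ?_, ?_, ?_⟩ <;> nlinarith [mul_nonneg (sub_nonneg.mpr hz) (sub_nonneg.mpr ht),
      mul_nonneg (sub_nonneg.mpr hz') (sub_nonneg.mpr ht')]
  rw [Set.smul_set_union]
  refine Set.union_subset ?_ ?_
  · exact smul_axisCone_subset_compl zero_ne_one (by rwa [h00, h01, h10, h11])
      (by rwa [h00, h01, h10, h11])
  · rw [Set.union_comm]
    exact smul_axisCone_subset_compl one_ne_zero (by rwa [h00, h01, h10, h11])
      (by rwa [h00, h01, h10, h11])

lemma exists_mul_one_sub_eq {d : ℝ} (hd : 3 / 16 ≤ d) (hd' : d < 1 / 4) :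
    ∃ t, 1 / 4 ≤ t ∧ t < 1 / 2 ∧ t * (1 - t) = d := by
  have hw : √(1 - 4 * d) ^ 2 = 1 - 4 * d := sq_sqrt (by linarith)
  have hw0 : 0 < √(1 - 4 * d) := sqrt_pos.mpr (by linarith)
  refine ⟨(1 - √(1 - 4 * d)) / 2, by nlinarith, by linarith, by linear_combination (-1 / 4) * hw⟩

theorem exists_injective_lift_commutator_pow
    (hA : (A : Matrix (Fin 2) (Fin 2) ℝ) = !![0, -1; 1, 0])
    (hT : (T : Matrix (Fin 2) (Fin 2) ℝ) = !![t, -(z * t); z * (1 - t), 1 - t])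
    (ht : 1 / 4 ≤ t) (ht' : t < 1 / 2) (hz : 3 / 2 ≤ |z|) (hz' : |z| ≤ 2) :
    ∃ m : ℕ, Function.Injective (FreeGroup.lift ![⁅A, T⁆ ^ m, T * ⁅A, T⁆ ^ m * T⁻¹]) := by
  have hdet : (1 + z ^ 2) * t * (1 - t) = 1 := by
    have := T.2
    rw [hT, Matrix.det_fin_two_of] at this
    linear_combination this
  have hmu : (1 + z ^ 2) * t ^ 2 < 1 := by nlinarith
  have hlam : 1 ≤ (1 + z ^ 2) * (1 - t) ^ 2 := by nlinarith
  obtain ⟨m, hm⟩ := exists_pow_lt_of_lt_one (by norm_num : (0 : ℝ) < 1 / 100) hmu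
  have hK : ((⁅A, T⁆ ^ m : SL(2, ℝ)) : Matrix (Fin 2) (Fin 2) ℝ) =
      Matrix.diagonal ![((1 + z ^ 2) * (1 - t) ^ 2) ^ m, ((1 + z ^ 2) * t ^ 2) ^ m] := by
    rw [Matrix.SpecialLinearGroup.coe_pow, coe_commutator_eq_diagonal hA hT, Matrix.diagonal_pow]
    congr 1
    ext i
    fin_cases i <;> rfl
  have hd : 100 * |((1 + z ^ 2) * t ^ 2) ^ m| ≤ |((1 + z ^ 2) * (1 - t) ^ 2) ^ m| := by
    rw [abs_of_nonneg (by positivity), abs_of_nonneg (by positivity)]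
    linarith [one_le_pow₀ (n := m) hlam]
  exact ⟨m, FreeGroup.injective_lift_conj_of_ping_pong axisCone_nonempty
    (disjoint_axisCone zero_ne_one) (smul_compl_axisCone_subset hK hd)
    (smul_compl_axisCone_subset (coe_inv_eq_diagonal hK) hd)
    (smul_axisCones_subset_compl hT ht ht'.le hz hz')⟩

end Construction

theorem exists_sl2_free_pair {z : ℝ} (hz : 3 < z ^ 2) (hz' : z ^ 2 ≤ 4) :
    ∃ A T : SL(2, ℝ), (A : Matrix (Fin 2) (Fin 2) ℝ) ^ 2 = -1 ∧ A ^ 2 = T ^ 3 ∧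
      ((T⁻¹ * A : SL(2, ℝ)) : Matrix (Fin 2) (Fin 2) ℝ).trace = z ∧
      ∃ x : Fin 2 → SL(2, ℝ), (∀ i, x i ∈ Subgroup.closure {A, T}) ∧
        Function.Injective (FreeGroup.lift x) := by
  -- `det T = 1` reads `(1 + z ^ 2) * t * (1 - t) = 1`, solvable with `t < 1 / 2` as `z ^ 2 > 3`.
  obtain ⟨t, ht, ht', htd⟩ := exists_mul_one_sub_eq (d := (1 + z ^ 2)⁻¹)
    (by rw [le_inv_comm₀ (by norm_num) (by positivity)]; linarith)
    (by rw [inv_lt_comm₀ (by positivity) (by norm_num)]; linarith)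
  let A : SL(2, ℝ) := ⟨!![0, -1; 1, 0], by simp [Matrix.det_fin_two_of]⟩
  let T : SL(2, ℝ) := ⟨!![t, -(z * t); z * (1 - t), 1 - t], by
    rw [Matrix.det_fin_two_of]
    field_simp at htd
    linear_combination htd⟩
  have hA2 : (A : Matrix (Fin 2) (Fin 2) ℝ) ^ 2 = -1 :=
    Matrix.sq_eq_neg_one_of_trace_eq_zero A.2 (by simp [A, Matrix.trace_fin_two_of])
  have hT3 : (T : Matrix (Fin 2) (Fin 2) ℝ) ^ 3 = -1 :=
    Matrix.pow_three_eq_neg_one_of_trace_eq_one T.2 (by simp [T, Matrix.trace_fin_two_of])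
  obtain ⟨m, hm⟩ := exists_injective_lift_commutator_pow (A := A) (T := T) rfl rfl ht ht'
    (by nlinarith [sq_abs z, abs_nonneg z]) (by nlinarith [sq_abs z, abs_nonneg z])
  have hAmem : A ∈ Subgroup.closure {A, T} := Subgroup.subset_closure (by simp)
  have hTmem : T ∈ Subgroup.closure {A, T} := Subgroup.subset_closure (by simp)
  have hKmem : ⁅A, T⁆ ^ m ∈ Subgroup.closure {A, T} := by
    rw [commutatorElement_def]
    exact pow_mem (mul_mem (mul_mem (mul_mem hAmem hTmem) (inv_mem hAmem)) (inv_mem hTmem)) m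
  refine ⟨A, T, hA2, Subtype.ext ?_, trace_coe_inv_mul rfl rfl, _, ?_, hm⟩
  · simp only [Matrix.SpecialLinearGroup.coe_pow, hA2, hT3]
  · intro i
    fin_cases i
    exacts [hKmem, mul_mem (mul_mem hTmem hKmem) (inv_mem hTmem)]

lemma three_lt_four_mul_cos_sq {n : ℕ} (hn : 7 ≤ n) : 3 < 4 * cos (π / n) ^ 2 := by
  have hlt : π / n < π / 6 :=
    div_lt_div_of_pos_left pi_pos (by norm_num) (by exact_mod_cast (by omega : 6 < n))
  have hcos : √3 / 2 < cos (π / n) :=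
    cos_pi_div_six ▸ cos_lt_cos_of_nonneg_of_le_pi (by positivity) (by linarith [pi_pos]) hlt
  nlinarith [sq_sqrt (show (0 : ℝ) ≤ 3 by norm_num), sqrt_nonneg 3]

/-- For `n ≥ 7` odd, `G_n` contains a non-abelian free subgroup. -/
theorem stmt_11 (n : ℕ) (hn : Odd n) (h7 : 7 ≤ n) :
    ∃ f : FreeGroup (Fin 2) →* PresentedGroup (relsGn n), Function.Injective f := by
  obtain ⟨k, rfl⟩ := hn
  set c := (-1) ^ k * (2 * cos (π / (2 * k + 1)))
  have hc : c ^ 2 = 4 * cos (π / (2 * k + 1)) ^ 2 := by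
    rw [mul_pow, ← pow_mul, Even.neg_one_pow ⟨k, by ring⟩]
    ring
  have hc3 : 3 < c ^ 2 := by
    have := three_lt_four_mul_cos_sq h7
    push_cast at this
    linarith
  have hc4 : c ^ 2 ≤ 4 := by nlinarith [cos_sq_le_one (π / (2 * k + 1))]
  obtain ⟨A, T, hA2, hAT, htr, x, hx, hinj⟩ := exists_sl2_free_pair hc3 hc4
  have hB : (T⁻¹ * A) ^ (2 * k + 1) = A ^ (2 * k + 1 + 1) := Subtype.ext <| by
    simp only [Matrix.SpecialLinearGroup.coe_pow]
    rw [Matrix.pow_two_mul_add_one_eq_neg_one_pow (T⁻¹ * A).2 (by omega) htr,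
      show 2 * k + 1 + 1 = 2 * (k + 1) by ring, pow_mul, hA2]
  let ψ := PresentedGroup.toGroup (lift_mem_relsGn_eq_one ⟨k, rfl⟩ hAT hB)
  have hA : A ∈ ψ.range := ⟨.of 0 * .of 1 * .of 0, by
    simp only [ψ, map_mul, PresentedGroup.toGroup.of, Matrix.cons_val_zero, Matrix.cons_val_one]
    group⟩
  have hT : T ∈ ψ.range := ⟨.of 0 * .of 1, by
    simp only [ψ, map_mul, PresentedGroup.toGroup.of, Matrix.cons_val_zero, Matrix.cons_val_one]
    group⟩
  exact exists_injective_of_forall_mem_range ψ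
    (fun i => (Subgroup.closure_le _).mpr (Set.pair_subset hA hT) (hx i)) hinj
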